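/- arXiv:2403.08514 — 4 statements merged into one kernel-verified Lean document; each statement's English description precedes it below -/
import Mathlib

section
/- Cox–de Boor recurrence: for every order k ≥ 2, every j ∈ ℤ and every x ∈ ℝ, the divided-difference B-spline satisfies B_{j,k}(x) = ω_{j,k}(x) · B_{j,k−1}(x) + (1 − ω_{j+1,k}(x)) · B_{j+1,k−1}(x), where ω_{j,k}(x) = (x − t_j)/(t_{j+k−1} − t_j). -/
/-- Divided differences of `g` on the knots `t j, t (j+1), …, t (j+k)`:
`divDiff t g j 0 = g (t j)` and
`divDiff t g j (k+1) = (divDiff t g (j+1) k − divDiff t g j k) / (t (j+k+1) − t j)`. -/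
noncomputable def divDiff (t : ℤ → ℝ) (g : ℝ → ℝ) : ℤ → ℕ → ℝ
  | j, 0 => g (t j)
  | j, (k + 1) =>
      (divDiff t g (j + 1) k - divDiff t g j k) / (t (j + (k : ℤ) + 1) - t j)

/-- Truncated power function `(u − x)₊^m`: equals `(u − x)^m` if `u > x`, and `0` otherwise. -/
noncomputable def truncPow (m : ℕ) (u x : ℝ) : ℝ :=
  if x < u then (u - x) ^ m else 0

/-- The divided-difference B-spline of order `k ≥ 1`:
`B_{j,k}(x) = [t_{j+1}, …, t_{j+k}](· − x)₊^{k−1} − [t_j, …, t_{j+k−1}](· − x)₊^{k−1}`. -/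
noncomputable def ddBspline (t : ℤ → ℝ) (j : ℤ) (k : ℕ) (x : ℝ) : ℝ :=
  divDiff t (fun u => truncPow (k - 1) u x) (j + 1) (k - 1) -
    divDiff t (fun u => truncPow (k - 1) u x) j (k - 1)

lemma divDiff_succ (t : ℤ → ℝ) (g : ℝ → ℝ) (j : ℤ) (k : ℕ) :
    divDiff t g j (k + 1)
      = (divDiff t g (j + 1) k - divDiff t g j k) / (t (j + (k : ℤ) + 1) - t j) := rfl

lemma tsub_ne (t : ℤ → ℝ) (ht : StrictMono t) {a b : ℤ} (h : a < b) : t b - t a ≠ 0 :=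
  sub_ne_zero.mpr (ht h).ne'

/-- Leibniz-type rule for divided differences of a linear factor times a function:
`[t_j, …, t_{j+k+1}]((· − x) g) = (t_j − x)[t_j, …, t_{j+k+1}]g + [t_{j+1}, …, t_{j+k+1}]g`. -/
lemma leibniz_lin (t : ℤ → ℝ) (ht : StrictMono t) (g : ℝ → ℝ) (x : ℝ) :
    ∀ (k : ℕ) (j : ℤ), divDiff t (fun u => (u - x) * g u) j (k + 1)
      = (t j - x) * divDiff t g j (k + 1) + divDiff t g (j + 1) k := by
  intro k
  induction k with
  | zero =>
      intro j
      have hΔ : t (j + (0:ℤ) + 1) - t j ≠ 0 := tsub_ne t ht (by omega)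
      simp only [divDiff]
      push_cast
      have e : j + (0:ℤ) + 1 = j + 1 := by ring
      rw [e] at hΔ ⊢
      field_simp
      ring
  | succ k ih =>
      intro j
      have hΔ : t (j + ((k:ℤ) + 1) + 1) - t j ≠ 0 := tsub_ne t ht (by omega)
      have hΔ' : t (j + 1 + (k:ℤ) + 1) - t (j + 1) ≠ 0 := tsub_ne t ht (by omega)
      rw [divDiff_succ t _ j (k+1), divDiff_succ t g j (k+1), divDiff_succ t g (j+1) k,
        ih (j+1), ih j]
      push_cast
      have e : j + 1 + (k:ℤ) + 1 = j + ((k:ℤ) + 1) + 1 := by ring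
      rw [e] at hΔ' ⊢
      rw [divDiff_succ t g (j+1) k] at *
      rw [e] at *
      field_simp
      ring

/-- Cox–de Boor recurrence for the divided-difference B-splines: for order `k ≥ 2`,
`B_{j,k}(x) = ω_{j,k}(x) B_{j,k−1}(x) + (1 − ω_{j+1,k}(x)) B_{j+1,k−1}(x)`,
where `ω_{j,k}(x) = (x − t_j)/(t_{j+k−1} − t_j)`. -/
theorem ddBspline_cox_de_boor (t : ℤ → ℝ) (ht : StrictMono t) (k : ℕ) (hk : 2 ≤ k)
    (j : ℤ) (x : ℝ) :
    ddBspline t j k x =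
      ((x - t j) / (t (j + (k : ℤ) - 1) - t j)) * ddBspline t j (k - 1) x +
      (1 - (x - t (j + 1)) / (t (j + (k : ℤ)) - t (j + 1))) * ddBspline t (j + 1) (k - 1) x := by
  obtain ⟨p, rfl⟩ : ∃ p, k = p + 2 := ⟨k - 2, by omega⟩
  have h1 : t (j + (p:ℤ) + 1) - t j ≠ 0 := tsub_ne t ht (by omega)
  have h2 : t (j + (p:ℤ) + 2) - t (j + 1) ≠ 0 := tsub_ne t ht (by omega)
  have tp : (fun u => truncPow (p + 1) u x) = fun u => (u - x) * truncPow p u x := by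
    funext u
    simp only [truncPow]
    split
    · ring
    · simp
  have hdd : ∀ a : ℤ, divDiff t (fun u => truncPow (p + 1) u x) a (p + 1)
      = (t a - x) * divDiff t (fun u => truncPow p u x) a (p + 1)
        + divDiff t (fun u => truncPow p u x) (a + 1) p := by
    intro a; rw [tp]; exact leibniz_lin t ht _ x p a
  have e1 : p + 2 - 1 = p + 1 := by omega
  have e2 : p + 1 - 1 = p := by omega
  simp only [ddBspline, e1, e2]
  rw [hdd j, hdd (j + 1), divDiff_succ t _ j p, divDiff_succ t _ (j + 1) p]
  push_cast
  have e3 : j + 1 + (p:ℤ) + 1 = j + (p:ℤ) + 2 := by ring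
  have e4 : j + ((p:ℤ) + 2) - 1 = j + (p:ℤ) + 1 := by ring
  have e5 : j + ((p:ℤ) + 2) = j + (p:ℤ) + 2 := by ring
  rw [e3, e4, e5]
  field_simp
  ring
end

section
/- Derivative of a B-spline: for every order k ≥ 2, every j ∈ ℤ and every x ∈ ℝ that is not a knot (x ≠ t_i for all i ∈ ℤ), the function B_{j,k} is differentiable at x with derivative D B_{j,k}(x) = (k − 1) · ( B_{j,k−1}(x)/(t_{j+k−1} − t_j) − B_{j+1,k−1}(x)/(t_{j+k} − t_{j+1}) ). -/
/-!
Write `S_{i,m} = B_{i,m} / (t_{i+m} - t_i)` and `ω_{i,m}(x) = (x - t_i) / (t_{i+m-1} - t_i)`, so that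
the recursion reads `B_{j,m} = ω_{j,m} B_{j,m-1} + (1 - ω_{j+1,m}) B_{j+1,m-1}`, and the claim is
`D B_{j,m+1} = m (S_{j,m} - S_{j+1,m})`. Induct on `m`; off the knots `B_{j,1}` is locally constant.
The product rule gives `D B_{j,m+2} = (S_{j,m+1} - S_{j+1,m+1}) + ω_{j,m+2} D B_{j,m+1}
+ (1 - ω_{j+1,m+2}) D B_{j+1,m+1}`, and after inserting the induction hypothesis the last two
terms are `m` times `ω_{j,m+2} (S_{j,m} - S_{j+1,m}) + (1 - ω_{j+1,m+2}) (S_{j+1,m} - S_{j+2,m})`.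
Dividing the recursion for `B_{j,m+1}` and `B_{j+1,m+1}` by the knot gaps shows that this
combination is again `S_{j,m+1} - S_{j+1,m+1}`.
-/

/-- B-splines of order `k ≥ 1` with knot sequence `t`, defined by the Cox–de Boor recursion:
`B_{j,1}(x) = 1` if `t j ≤ x < t (j+1)` and `0` otherwise; and for `k ≥ 2`,
`B_{j,k}(x) = ((x − t_j)/(t_{j+k−1} − t_j)) B_{j,k−1}(x)
            + ((t_{j+k} − x)/(t_{j+k} − t_{j+1})) B_{j+1,k−1}(x)`.
(The value for order `0` is irrelevant and set to `0`.) -/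
noncomputable def bspline (t : ℤ → ℝ) : ℕ → ℤ → ℝ → ℝ
  | 0, _, _ => 0
  | 1, j, x => if t j ≤ x ∧ x < t (j + 1) then 1 else 0
  | (k + 2), j, x =>
      ((x - t j) / (t (j + (k : ℤ) + 1) - t j)) * bspline t (k + 1) j x +
      ((t (j + (k : ℤ) + 2) - x) / (t (j + (k : ℤ) + 2) - t (j + 1))) *
        bspline t (k + 1) (j + 1) x

open Topology

section
variable (t : ℤ → ℝ)

lemma bspline_succ_succ (k : ℕ) (j : ℤ) (x : ℝ) :
    bspline t (k + 2) j x =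
      (x - t j) / (t (j + k + 1) - t j) * bspline t (k + 1) j x +
      (t (j + k + 2) - x) / (t (j + k + 2) - t (j + 1)) * bspline t (k + 1) (j + 1) x :=
  rfl

lemma bspline_one_eventuallyEq {x : ℝ} (hx : ∀ i, x ≠ t i) (j : ℤ) :
    bspline t 1 j =ᶠ[𝓝 x] fun _ => bspline t 1 j x := by
  rcases lt_or_gt_of_ne (hx j) with hlt | hgt
  · filter_upwards [Iio_mem_nhds hlt] with y (hy : y < t j)
    simp [bspline, not_le.mpr hlt, not_le.mpr hy]
  rcases lt_or_gt_of_ne (hx (j + 1)) with hlt' | hgt'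
  · filter_upwards [Ioo_mem_nhds hgt hlt'] with y hy
    simp [bspline, hy.1.le, hy.2, hgt.le, hlt']
  · filter_upwards [Ioi_mem_nhds hgt'] with y (hy : t (j + 1) < y)
    simp [bspline, not_lt.mpr hy.le, not_lt.mpr hgt'.le]

lemma hasDerivAt_bspline_one {x : ℝ} (hx : ∀ i, x ≠ t i) (j : ℤ) :
    HasDerivAt (bspline t 1 j) 0 x :=
  (hasDerivAt_const x _).congr_of_eventuallyEq (bspline_one_eventuallyEq t hx j)

lemma bspline_succ_succ_div_sub_div (ht : StrictMono t) (k : ℕ) (j : ℤ) (x : ℝ) :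
    bspline t (k + 2) j x / (t (j + k + 2) - t j) -
        bspline t (k + 2) (j + 1) x / (t (j + k + 3) - t (j + 1)) =
      (x - t j) / (t (j + k + 2) - t j) *
          (bspline t (k + 1) j x / (t (j + k + 1) - t j) -
            bspline t (k + 1) (j + 1) x / (t (j + k + 2) - t (j + 1))) +
        (t (j + k + 3) - x) / (t (j + k + 3) - t (j + 1)) *
          (bspline t (k + 1) (j + 1) x / (t (j + k + 2) - t (j + 1)) -
            bspline t (k + 1) (j + 2) x / (t (j + k + 3) - t (j + 2))) := by
  have hne : ∀ {a b : ℤ}, a < b → t b - t a ≠ 0 := fun h => sub_ne_zero.mpr (ht h).ne'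
  have h1 : t (j + k + 1) - t j ≠ 0 := hne (by omega)
  have h2 : t (j + k + 2) - t j ≠ 0 := hne (by omega)
  have h3 : t (j + k + 2) - t (j + 1) ≠ 0 := hne (by omega)
  have h4 : t (j + k + 3) - t (j + 1) ≠ 0 := hne (by omega)
  have h5 : t (j + k + 3) - t (j + 2) ≠ 0 := hne (by omega)
  rw [bspline_succ_succ, bspline_succ_succ t k (j + 1), show j + 1 + k + 1 = j + k + 2 by ring,
    show j + 1 + k + 2 = j + k + 3 by ring, show j + 1 + 1 = j + 2 by ring]
  field_simp
  ring

theorem hasDerivAt_bspline_succ (ht : StrictMono t) {x : ℝ} (hx : ∀ i, x ≠ t i) (n : ℕ)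
    (j : ℤ) :
    HasDerivAt (bspline t (n + 1) j)
      (n * (bspline t n j x / (t (j + n) - t j) -
        bspline t n (j + 1) x / (t (j + n + 1) - t (j + 1)))) x := by
  induction n generalizing j with
  | zero => simpa using hasDerivAt_bspline_one t hx j
  | succ n ih =>
    have hleft : HasDerivAt (fun y => (y - t j) / (t (j + n + 1) - t j))
        (1 / (t (j + n + 1) - t j)) x :=
      ((hasDerivAt_id x).sub_const _).div_const _
    have hright : HasDerivAt (fun y => (t (j + n + 2) - y) / (t (j + n + 2) - t (j + 1)))
        (-1 / (t (j + n + 2) - t (j + 1))) x :=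
      ((hasDerivAt_id x).const_sub _).div_const _
    refine ((hleft.mul (ih j)).add (hright.mul (ih (j + 1)))).congr_deriv ?_
    -- `ring_nf` identifies knot indices such as `j + 1 + ↑k` and `j + ↑k + 1`
    rcases n with _ | k
    · push_cast
      ring_nf
    · have key := bspline_succ_succ_div_sub_div t ht k j x
      push_cast
      ring_nf at key ⊢
      linear_combination -(k + 1 : ℝ) * key

end

/-- Derivative of a B-spline: for every order `k ≥ 2` and every `x` that is not a knot,
`B_{j,k}` is differentiable at `x` with derivative
`(k − 1) (B_{j,k−1}(x)/(t_{j+k−1} − t_j) − B_{j+1,k−1}(x)/(t_{j+k} − t_{j+1}))`. -/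
theorem bspline_hasDerivAt (t : ℤ → ℝ) (ht : StrictMono t) (k : ℕ) (hk : 2 ≤ k)
    (j : ℤ) (x : ℝ) (hx : ∀ i : ℤ, x ≠ t i) :
    HasDerivAt (fun y => bspline t k j y)
      (((k : ℝ) - 1) *
        (bspline t (k - 1) j x / (t (j + (k : ℤ) - 1) - t j) -
         bspline t (k - 1) (j + 1) x / (t (j + (k : ℤ)) - t (j + 1)))) x := by
  obtain ⟨n, rfl⟩ : ∃ n, k = n + 1 := ⟨k - 1, by omega⟩
  convert hasDerivAt_bspline_succ t ht hx n j using 1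
  push_cast [Nat.add_sub_cancel]
  ring_nf
end

section
/- Integral of a B-spline from its left knot: let k ≥ 1, j ∈ ℤ, and let x ∈ ℝ satisfy t_j ≤ x ≤ t_{j+k}; let s ∈ ℤ be such that t_{s−1} < x ≤ t_s. Then ∫_{t_j}^{x} B_{j,k}(u) du = ((t_{j+k} − t_j)/k) · Σ_{i=j}^{s−1} B_{i,k+1}(x), where the sum is over integers i with j ≤ i ≤ s−1 (and is empty when s−1 < j). -/
open Finset Set Topology MeasureTheory

theorem Finset.sum_Ico_sub_int_of_le {M : Type*} [AddCommGroup M] (f : ℤ → M) {a b : ℤ}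
    (hab : a ≤ b) : ∑ i ∈ Ico a b, (f i - f (i + 1)) = f a - f b := by
  induction b, hab using Int.leInduction with
  | base => simp
  | succ n hn ih =>
    rw [← insert_Ico_right_eq_Ico_add_one hn, sum_insert (by simp), ih]
    abel

/-- The Curry–Schoenberg M-spline. -/
noncomputable def mspline (t : ℤ → ℝ) (k : ℕ) (j : ℤ) (x : ℝ) : ℝ :=
  k * bspline t k j x / (t (j + k) - t j)

section

variable {t : ℤ → ℝ}

theorem mspline_succ (k : ℕ) (j : ℤ) (x : ℝ) :
    mspline t (k + 1) j x = (bspline t (k + 1) j x + (x - t j) * mspline t k j x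
      + (t (j + k + 1) - x) * mspline t k (j + 1) x) / (t (j + k + 1) - t j) := by
  cases k with
  | zero => simp [mspline]
  | succ k =>
    simp only [mspline, bspline.eq_3]
    push_cast
    simp only [← add_assoc, show j + 1 + k + 1 = j + k + 2 by ring,
      show j + k + 1 + 1 = j + k + 2 by ring]
    ring

namespace bspline

theorem eq_zero_of_lt (ht : StrictMono t) :
    ∀ (k : ℕ) {j : ℤ} {x : ℝ}, x < t j → bspline t k j x = 0
  | 0, _, _, _ => rfl
  | 1, _, _, h => by simp [bspline, not_le.mpr h]
  | k + 2, j, x, h => by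
    rw [bspline, eq_zero_of_lt ht (k + 1) h,
      eq_zero_of_lt ht (k + 1) (h.trans (ht (lt_add_one j)))]
    ring

theorem eq_zero_of_le (ht : StrictMono t) (k : ℕ) {j : ℤ} {x : ℝ} (h : x ≤ t j) :
    bspline t (k + 2) j x = 0 := by
  obtain h | rfl := h.lt_or_eq
  · exact eq_zero_of_lt ht _ h
  · rw [bspline, eq_zero_of_lt ht (k + 1) (ht (lt_add_one j))]
    ring

theorem one_eventuallyEq (j : ℤ) (x : ℝ) :
    bspline t 1 j =ᶠ[𝓝[≥] x] fun _ ↦ bspline t 1 j x := by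
  obtain h | h := lt_or_ge x (t j)
  · filter_upwards [Ico_mem_nhdsGE h] with y hy
    simp [bspline, not_le.mpr hy.2, not_le.mpr h]
  obtain h' | h' := lt_or_ge x (t (j + 1))
  · filter_upwards [Ico_mem_nhdsGE h'] with y hy
    simp [bspline, h.trans hy.1, hy.2, h, h']
  · filter_upwards [self_mem_nhdsWithin] with y hy
    simp [bspline, not_lt.mpr (h'.trans hy), not_lt.mpr h']

theorem two_eq_max_min (ht : StrictMono t) (j : ℤ) :
    bspline t 2 j = fun x ↦ max 0 (min ((x - t j) / (t (j + 1) - t j))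
      ((t (j + 2) - x) / (t (j + 2) - t (j + 1)))) := by
  funext x
  have hab : t j < t (j + 1) := ht (by omega)
  have hbc : t (j + 1) < t (j + 2) := ht (by omega)
  simp only [bspline, Nat.cast_zero, add_zero, show j + 1 + 1 = j + 2 by ring]
  set a := t j; set b := t (j + 1); set c := t (j + 2)
  set p := (x - a) / (b - a)
  set q := (c - x) / (c - b)
  obtain hxa | hxa := lt_or_ge x a
  · have hp : p < 0 := div_neg_of_neg_of_pos (by linarith) (by linarith)
    rw [if_neg (fun h ↦ by linarith [h.1]), if_neg (fun h ↦ by linarith [h.1]),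
      max_eq_left (by linarith [min_le_left p q])]
    ring
  obtain hxb | hxb := lt_or_ge x b
  · have hp0 : 0 ≤ p := div_nonneg (by linarith) (by linarith)
    have hp1 : p ≤ 1 := (div_le_one (by linarith)).2 (by linarith)
    have hq1 : 1 ≤ q := (one_le_div (by linarith)).2 (by linarith)
    rw [if_pos ⟨hxa, hxb⟩, if_neg (fun h ↦ by linarith [h.1]), min_eq_left (by linarith),
      max_eq_right hp0]
    ring
  obtain hxc | hxc := lt_or_ge x c
  · have hq0 : 0 ≤ q := div_nonneg (by linarith) (by linarith)
    have hq1 : q ≤ 1 := (div_le_one (by linarith)).2 (by linarith)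
    have hp1 : 1 ≤ p := (one_le_div (by linarith)).2 (by linarith)
    rw [if_neg (fun h ↦ by linarith [h.2]), if_pos ⟨hxb, hxc⟩, min_eq_right (by linarith),
      max_eq_right hq0]
    ring
  · have hq : q ≤ 0 := div_nonpos_of_nonpos_of_nonneg (by linarith) (by linarith)
    rw [if_neg (fun h ↦ by linarith [h.2]), if_neg (fun h ↦ by linarith [h.2]),
      max_eq_left (by linarith [min_le_right p q])]
    ring

theorem continuous (ht : StrictMono t) : ∀ (k : ℕ) (j : ℤ), Continuous (bspline t (k + 2) j)
  | 0, j => by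
    rw [two_eq_max_min ht]
    fun_prop
  | k + 1, j => by
    have h₁ := continuous ht k j
    have h₂ := continuous ht k (j + 1)
    rw [show bspline t (k + 3) j = _ from funext fun x ↦ bspline.eq_3 t j x (k + 1)]
    fun_prop

theorem intervalIntegrable (ht : StrictMono t) (k : ℕ) (j : ℤ) (a b : ℝ) :
    IntervalIntegrable (bspline t k j) volume a b := by
  match k with
  | 0 => exact intervalIntegrable_const (c := 0)
  | 1 =>
    have : bspline t 1 j = (Ico (t j) (t (j + 1))).indicator 1 := by
      funext x; simp [bspline, Set.indicator]
    rw [this]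
    exact (integrable_indicator_iff measurableSet_Ico).2
      (integrableOn_const measure_Ico_lt_top.ne) |>.intervalIntegrable
  | k + 2 => exact (continuous ht k j).intervalIntegrable a b

theorem hasDerivWithinAt_Ici (ht : StrictMono t) (k : ℕ) (j : ℤ) (x : ℝ) :
    HasDerivWithinAt (bspline t (k + 1) j) (mspline t k j x - mspline t k (j + 1) x)
      (Ici x) x := by
  induction k generalizing j with
  | zero =>
    simpa [mspline] using
      (hasDerivWithinAt_const x (Ici x) (bspline t 1 j x)).congr_of_eventuallyEq
        (one_eventuallyEq j x) rfl
  | succ k ih =>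
    have hD₁ : t (j + k + 1) - t j ≠ 0 := (sub_pos.2 (ht (by omega))).ne'
    have hD₂ : t (j + k + 2) - t (j + 1) ≠ 0 := (sub_pos.2 (ht (by omega))).ne'
    have hp := (((hasDerivAt_id x).sub_const (t j)).div_const
      (t (j + k + 1) - t j)).hasDerivWithinAt (s := Ici x)
    have hq := (((hasDerivAt_id x).const_sub (t (j + k + 2))).div_const
      (t (j + k + 2) - t (j + 1))).hasDerivWithinAt (s := Ici x)
    rw [show bspline t (k + 2) j = _ from funext fun x ↦ bspline.eq_3 t j x k]
    refine ((hp.mul (ih j)).add (hq.mul (ih (j + 1)))).congr_deriv ?_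
    rw [mspline_succ, mspline_succ]
    simp only [id, show j + 1 + k + 1 = j + k + 2 by ring, show j + 1 + 1 = j + 2 by ring]
    field_simp
    ring

theorem hasDerivWithinAt_sum_Ico (ht : StrictMono t) (k : ℕ) (j : ℤ) {x : ℝ}
    (hx : x < t (j + k)) :
    HasDerivWithinAt (fun y ↦ ∑ i ∈ Ico j (j + k), bspline t (k + 1) i y) (mspline t k j x)
      (Ici x) x := by
  have h := HasDerivWithinAt.fun_sum (u := Ico j (j + k)) fun i _ ↦ hasDerivWithinAt_Ici ht k i x
  have hlast : mspline t k (j + k) x = 0 := by simp [mspline, eq_zero_of_lt ht k hx]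
  rwa [Finset.sum_Ico_sub_int_of_le _ (by omega), hlast, sub_zero] at h

theorem sum_Ico_eq_of_le_of_le (ht : StrictMono t) (k : ℕ) (j : ℤ) {a b : ℤ} {x : ℝ}
    (ha : x ≤ t a) (hb : x ≤ t b) :
    ∑ i ∈ Ico j a, bspline t (k + 2) i x = ∑ i ∈ Ico j b, bspline t (k + 2) i x := by
  wlog hab : a ≤ b generalizing a b
  · exact (this hb ha (le_of_not_ge hab)).symm
  refine sum_subset (Ico_subset_Ico_right hab) fun i hib hia ↦ eq_zero_of_le ht k ?_
  simp only [Finset.mem_Ico, not_and, not_lt] at hib hia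
  exact ha.trans (ht.monotone (hia hib.1))

end bspline

theorem integral_mspline_eq_sum (ht : StrictMono t) (k : ℕ) (j : ℤ) {x : ℝ}
    (hx : x ≤ t (j + k)) :
    ∫ u in t j..x, mspline t k j u = ∑ i ∈ Ico j (j + k), bspline t (k + 1) i x := by
  obtain _ | k := k
  · simp [mspline]
  have hcont : Continuous fun y ↦ ∑ i ∈ Ico j (j + (k + 1 : ℕ)), bspline t (k + 2) i y :=
    continuous_finsetSum _ fun i _ ↦ bspline.continuous ht k i
  have hzero : ∑ i ∈ Ico j (j + (k + 1 : ℕ)), bspline t (k + 2) i (t j) = 0 :=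
    sum_eq_zero fun i hi ↦ bspline.eq_zero_of_le ht k (ht.monotone (Finset.mem_Ico.1 hi).1)
  rw [intervalIntegral.integral_eq_sub_of_hasDeriv_right hcont.continuousOn
    (fun u hu ↦ (bspline.hasDerivWithinAt_sum_Ico ht _ j
      (hu.2.trans_le (max_le (ht.monotone (by omega)) hx))).mono Ioi_subset_Ici_self)
    (((bspline.intervalIntegrable ht _ j _ _).const_mul _).div_const _), hzero, sub_zero]

end

theorem bspline_integral_from_left_knot_general (t : ℤ → ℝ) (ht : StrictMono t) (k : ℕ)
    (j s : ℤ) (x : ℝ) (hx₂ : x ≤ t (j + (k : ℤ)))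
    (hs₂ : x ≤ t s) :
    ∫ u in (t j)..x, bspline t k j u =
      ((t (j + (k : ℤ)) - t j) / (k : ℝ)) *
        ∑ i ∈ Finset.Icc j (s - 1), bspline t (k + 1) i x := by
  obtain _ | k := k
  · simp [bspline]
  have hB : bspline t (k + 1) j = fun u ↦
      (t (j + (k + 1 : ℕ)) - t j) / (k + 1 : ℕ) * mspline t (k + 1) j u := by
    have : t (j + (k + 1 : ℕ)) - t j ≠ 0 := (sub_pos.2 (ht (by omega))).ne'
    funext u
    rw [mspline]
    field_simp
  rw [hB, intervalIntegral.integral_const_mul, integral_mspline_eq_sum ht _ j hx₂,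
    Finset.Icc_sub_one_right_eq_Ico, bspline.sum_Ico_eq_of_le_of_le ht k j hx₂ hs₂]

/-- Integral of a B-spline from its left knot: for order `k ≥ 1`, `t_j ≤ x ≤ t_{j+k}`
and `s` such that `t_{s−1} < x ≤ t_s`,
`∫_{t_j}^{x} B_{j,k}(u) du = ((t_{j+k} − t_j)/k) Σ_{i=j}^{s−1} B_{i,k+1}(x)`. -/
theorem bspline_integral_from_left_knot (t : ℤ → ℝ) (ht : StrictMono t) (k : ℕ)
    (hk : 1 ≤ k) (j s : ℤ) (x : ℝ) (hx₁ : t j ≤ x) (hx₂ : x ≤ t (j + (k : ℤ)))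
    (hs₁ : t (s - 1) < x) (hs₂ : x ≤ t s) :
    ∫ u in (t j)..x, bspline t k j u =
      ((t (j + (k : ℤ)) - t j) / (k : ℝ)) *
        ∑ i ∈ Finset.Icc j (s - 1), bspline t (k + 1) i x :=
  bspline_integral_from_left_knot_general t ht k j s x hx₂ hs₂
end

section
/- Integral of a B-spline from an interior knot: let k ≥ 1 and let j ≤ i be integers, and let x ∈ ℝ satisfy t_i < x ≤ t_{j+k}; let s ∈ ℤ be such that t_{s−1} < x ≤ t_s. Then ∫_{t_i}^{x} B_{j,k}(u) du = ((t_{j+k} − t_j)/k) · ( Σ_{m=j}^{s−1} B_{m,k+1}(x) − Σ_{m=j}^{i−1} B_{m,k+1}(t_i) ), where each sum is over the indicated integer range (empty sums being zero). -/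
theorem Finset.sum_Icc_sub_add_one {G : Type*} [AddCommGroup G] (g : ℤ → G) {a b : ℤ}
    (hab : a ≤ b + 1) : ∑ m ∈ Finset.Icc a b, (g m - g (m + 1)) = g a - g (b + 1) := by
  obtain ⟨n, rfl⟩ : ∃ n : ℕ, b = a - 1 + n := ⟨(b - (a - 1)).toNat, by omega⟩
  induction n with
  | zero => simp
  | succ n ih =>
    rw [Nat.cast_succ, ← add_assoc, ← Finset.insert_Icc_right_eq_Icc_add_one (by omega),
      Finset.sum_insert (by simp), ih (by omega)]
    abel

section

variable {t : ℤ → ℝ}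

lemma bspline_succ (k : ℕ) (hk : 1 ≤ k) (m : ℤ) (x : ℝ) :
    bspline t (k + 1) m x =
      (x - t m) / (t (m + k) - t m) * bspline t k m x +
      (t (m + 1 + k) - x) / (t (m + 1 + k) - t (m + 1)) * bspline t k (m + 1) x := by
  obtain ⟨n, rfl⟩ := Nat.exists_eq_add_of_le' hk
  simp only [bspline, Nat.cast_add, Nat.cast_one]
  ring_nf

lemma bspline_eq_zero_of_lt (ht : Monotone t) :
    ∀ (k : ℕ) (m : ℤ) {x : ℝ}, x < t m → bspline t k m x = 0
  | 0, _, _, _ => rfl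
  | 1, m, x, hx => if_neg fun h => (h.1.trans_lt hx).false
  | k + 2, m, x, hx => by
    have hx' : x < t (m + 1) := hx.trans_le (ht (by omega))
    simp only [bspline, bspline_eq_zero_of_lt ht (k + 1) m hx,
      bspline_eq_zero_of_lt ht (k + 1) (m + 1) hx', mul_zero, add_zero]

lemma bspline_eq_zero_of_le (ht : StrictMono t) {k : ℕ} (hk : 1 ≤ k) (m : ℤ) {x : ℝ}
    (hx : x ≤ t m) : bspline t (k + 1) m x = 0 := by
  rcases hx.lt_or_eq with hx | rfl
  · exact bspline_eq_zero_of_lt ht.monotone _ m hx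
  · rw [bspline_succ k hk, bspline_eq_zero_of_lt ht.monotone k (m + 1) (ht (by omega))]
    ring

lemma bspline_two_eq_max_min (ht : StrictMono t) (m : ℤ) (x : ℝ) :
    bspline t 2 m x =
      max 0 (min ((x - t m) / (t (m + 1) - t m)) ((t (m + 2) - x) / (t (m + 2) - t (m + 1)))) := by
  have h₀ : 0 < t (m + 1) - t m := sub_pos.2 (ht (by omega))
  have h₁ : 0 < t (m + 2) - t (m + 1) := sub_pos.2 (ht (by omega))
  simp only [bspline, Nat.cast_zero, add_zero, show m + 1 + 1 = m + 2 by ring]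
  rcases lt_or_ge x (t m) with hx | hx
  · have : (x - t m) / (t (m + 1) - t m) < 0 := div_neg_of_neg_of_pos (by linarith) h₀
    rw [if_neg (by intro h; linarith [h.1]), if_neg (by intro h; linarith [h.1]),
      max_eq_left (min_le_left _ _ |>.trans this.le)]
    ring
  rcases lt_or_ge x (t (m + 1)) with hx' | hx'
  · have hα : (x - t m) / (t (m + 1) - t m) ≤ 1 := by rw [div_le_one h₀]; linarith
    have hβ : 1 ≤ (t (m + 2) - x) / (t (m + 2) - t (m + 1)) := by rw [one_le_div h₁]; linarith
    rw [if_pos ⟨hx, hx'⟩, if_neg (by intro h; linarith [h.1]), min_eq_left (hα.trans hβ),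
      max_eq_right (div_nonneg (by linarith) h₀.le)]
    ring
  rcases lt_or_ge x (t (m + 2)) with hx'' | hx''
  · have hα : 1 ≤ (x - t m) / (t (m + 1) - t m) := by rw [one_le_div h₀]; linarith
    have hβ : (t (m + 2) - x) / (t (m + 2) - t (m + 1)) ≤ 1 := by rw [div_le_one h₁]; linarith
    rw [if_neg (by intro h; linarith [h.2]), if_pos ⟨hx', hx''⟩, min_eq_right (hβ.trans hα),
      max_eq_right (div_nonneg (by linarith) h₁.le)]
    ring
  · have : (t (m + 2) - x) / (t (m + 2) - t (m + 1)) ≤ 0 :=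
      div_nonpos_of_nonpos_of_nonneg (by linarith) h₁.le
    rw [if_neg (by intro h; linarith [h.2]), if_neg (by intro h; linarith [h.2]),
      max_eq_left (min_le_right _ _ |>.trans this)]
    ring

lemma continuous_bspline (ht : StrictMono t) {k : ℕ} (hk : 1 ≤ k) (m : ℤ) :
    Continuous (bspline t (k + 1) m) := by
  induction k, hk using Nat.le_induction generalizing m with
  | base =>
    simp only [funext (bspline_two_eq_max_min ht m)]
    fun_prop
  | succ k hk ih =>
    have := ih m
    have := ih (m + 1)
    simp only [funext (bspline_succ (k + 1) (by omega) m)]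
    fun_prop

lemma intervalIntegrable_bspline (ht : StrictMono t) {k : ℕ} (hk : 1 ≤ k) (m : ℤ) (a b : ℝ) :
    IntervalIntegrable (bspline t k m) MeasureTheory.volume a b := by
  obtain ⟨n, rfl⟩ := Nat.exists_eq_add_of_le' hk
  rcases n with _ | n
  · have : bspline t 1 m = (Set.Ico (t m) (t (m + 1))).indicator 1 := by
      ext x; simp [bspline, Set.indicator_apply]
    rw [this]
    exact (MeasureTheory.integrableOn_const measure_Icc_lt_top.ne).indicator measurableSet_Ico
      |>.intervalIntegrable
  · exact (continuous_bspline ht (by omega) m).intervalIntegrable a b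

lemma eventually_bspline_one_eq (m : ℤ) {x : ℝ} (hx : x ∉ Set.range t) :
    ∀ᶠ y in nhds x, bspline t 1 m y = bspline t 1 m x := by
  have side : ∀ n : ℤ, ∀ᶠ y in nhds x, (t n ≤ y ↔ t n ≤ x) ∧ (y < t n ↔ x < t n) := by
    intro n
    have hn : t n ≠ x := fun h => hx ⟨n, h⟩
    rcases hn.lt_or_gt with h | h
    · filter_upwards [eventually_gt_nhds h] with y hy
      constructor <;> constructor <;> intro <;> linarith
    · filter_upwards [eventually_lt_nhds h] with y hy
      constructor <;> constructor <;> intro <;> linarith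
  filter_upwards [side m, side (m + 1)] with y h₀ h₁
  simp only [bspline, h₀.1, h₁.2]

lemma hasDerivAt_bspline (ht : StrictMono t) (k : ℕ) (m : ℤ) {x : ℝ} (hx : x ∉ Set.range t) :
    HasDerivAt (bspline t (k + 1) m)
      (k * bspline t k m x / (t (m + k) - t m) -
        k * bspline t k (m + 1) x / (t (m + 1 + k) - t (m + 1))) x := by
  induction k generalizing m with
  | zero =>
    simpa using (hasDerivAt_const x _).congr_of_eventuallyEq (eventually_bspline_one_eq m hx)
  | succ k ih =>
    have hα := ((hasDerivAt_id x).sub_const (t m)).div_const (t (m + ↑(k + 1)) - t m)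
    have hβ := ((hasDerivAt_id x).const_sub (t (m + 1 + ↑(k + 1)))).div_const
      (t (m + 1 + ↑(k + 1)) - t (m + 1))
    refine (((hα.mul (ih m)).add (hβ.mul (ih (m + 1)))).congr_of_eventuallyEq
      (.of_forall fun y => bspline_succ (k + 1) (by omega) m y)).congr_deriv ?_
    rcases Nat.eq_zero_or_pos k with rfl | hk
    · push_cast
      ring
    have hd₀ : t (m + 1 + k) - t m ≠ 0 := sub_ne_zero.2 (ht (by omega)).ne'
    have hd₁ : t (m + 1 + 1 + k) - t (m + 1) ≠ 0 := sub_ne_zero.2 (ht (by omega)).ne'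
    -- Expanding the order-`k + 1` splines once more turns the claim into a rational identity
    -- in `B_{m,k}, B_{m+1,k}, B_{m+2,k}`.
    rw [show m + ↑(k + 1) = m + 1 + k by push_cast; ring,
      show m + 1 + ↑(k + 1) = m + 1 + 1 + k by push_cast; ring,
      bspline_succ k hk m, bspline_succ k hk (m + 1), id]
    push_cast
    field_simp
    ring

lemma hasDerivAt_sum_bspline (ht : StrictMono t) (k : ℕ) {j s : ℤ} (hjs : j ≤ s) {x : ℝ}
    (hx : x ∉ Set.range t) (hxs : x < t s) :
    HasDerivAt (fun y => ∑ m ∈ Finset.Icc j (s - 1), bspline t (k + 1) m y)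
      (k * bspline t k j x / (t (j + k) - t j)) x := by
  have hsum := HasDerivAt.fun_sum fun m (_ : m ∈ Finset.Icc j (s - 1)) =>
    hasDerivAt_bspline ht k m hx
  rwa [Finset.sum_Icc_sub_add_one (fun m => k * bspline t k m x / (t (m + k) - t m))
    (by omega), sub_add_cancel, bspline_eq_zero_of_lt ht.monotone k s hxs, mul_zero,
    zero_div, sub_zero] at hsum

lemma sum_bspline_Icc_eq_of_le (ht : StrictMono t) {k : ℕ} (hk : 1 ≤ k) {j i s : ℤ}
    (his : i ≤ s) : ∑ m ∈ Finset.Icc j (s - 1), bspline t (k + 1) m (t i) =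
      ∑ m ∈ Finset.Icc j (i - 1), bspline t (k + 1) m (t i) := by
  refine (Finset.sum_subset (Finset.Icc_subset_Icc_right (by omega)) fun m hm hm' => ?_).symm
  exact bspline_eq_zero_of_le ht hk m (ht.monotone (by simp at hm hm'; omega))

end

theorem bspline_integral_from_interior_knot_general (t : ℤ → ℝ) (ht : StrictMono t) (k : ℕ)
    (hk : 1 ≤ k) (j i s : ℤ) (hji : j ≤ i) (x : ℝ) (hx₁ : t i < x)
    (hs₂ : x ≤ t s) :
    ∫ u in (t i)..x, bspline t k j u =
      ((t (j + (k : ℤ)) - t j) / (k : ℝ)) *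
        ((∑ m ∈ Finset.Icc j (s - 1), bspline t (k + 1) m x) -
         (∑ m ∈ Finset.Icc j (i - 1), bspline t (k + 1) m (t i))) := by
  have his : i < s := ht.lt_iff_lt.1 (hx₁.trans_le hs₂)
  rw [← sum_bspline_Icc_eq_of_le ht hk his.le, mul_sub]
  refine MeasureTheory.integral_eq_of_hasDerivAt_off_countable_of_le
    (fun y => (t (j + k) - t j) / k * ∑ m ∈ Finset.Icc j (s - 1), bspline t (k + 1) m y) _
    hx₁.le (Set.countable_range t) ?_ (fun y hy => ?_) (intervalIntegrable_bspline ht hk j _ _)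
  · exact (continuous_const.mul (continuous_finsetSum _ fun m _ =>
      continuous_bspline ht hk m)).continuousOn
  · refine ((hasDerivAt_sum_bspline ht k (by omega) hy.2 (hy.1.2.trans_le hs₂)).const_mul _)
      |>.congr_deriv ?_
    have : (k : ℝ) ≠ 0 := Nat.cast_ne_zero.2 (by omega)
    have : t (j + k) - t j ≠ 0 := sub_ne_zero.2 (ht (by omega)).ne'
    field_simp

/-- Integral of a B-spline from an interior knot: for order `k ≥ 1`, integers `j ≤ i`,
`t_i < x ≤ t_{j+k}`, and `s` such that `t_{s−1} < x ≤ t_s`,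
`∫_{t_i}^{x} B_{j,k}(u) du
 = ((t_{j+k} − t_j)/k) (Σ_{m=j}^{s−1} B_{m,k+1}(x) − Σ_{m=j}^{i−1} B_{m,k+1}(t_i))`. -/
theorem bspline_integral_from_interior_knot (t : ℤ → ℝ) (ht : StrictMono t) (k : ℕ)
    (hk : 1 ≤ k) (j i s : ℤ) (hji : j ≤ i) (x : ℝ) (hx₁ : t i < x)
    (hx₂ : x ≤ t (j + (k : ℤ))) (hs₁ : t (s - 1) < x) (hs₂ : x ≤ t s) :
    ∫ u in (t i)..x, bspline t k j u =
      ((t (j + (k : ℤ)) - t j) / (k : ℝ)) *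
        ((∑ m ∈ Finset.Icc j (s - 1), bspline t (k + 1) m x) -
         (∑ m ∈ Finset.Icc j (i - 1), bspline t (k + 1) m (t i))) :=
  bspline_integral_from_interior_knot_general t ht k hk j i s hji x hx₁ hs₂
end
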